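/- arXiv:1802.07644 — 4 statements merged into one kernel-verified Lean document; each statement's English description precedes it below -/
import Mathlib

section
/- The swap CA R is not gauge-invariant: there is no function Z : (ℤ → Z₂) → (ℤ → Z₂) such that for all φ : ℤ → Z₂, all configurations ψ : ℤ → Z₂ × Z₂, and all x, applying the local transformation with parameter φ before the update equals applying the local transformation with parameter Zφ after the update; that is, for every such Z the equality (X ⊗ X)^{(Zφ)(x)} λ_R(ψ(x−1), ψ(x+1)) = λ_R((X⊗X)^{φ(x−1)} ψ(x−1), (X⊗X)^{φ(x+1)} ψ(x+1)) fails for some choice of φ, ψ, x. -/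
/-- (X⊗X)^b adds b to both components of a cell state. -/
def XX (b : ZMod 2) (p : ZMod 2 × ZMod 2) : ZMod 2 × ZMod 2 := (p.1 + b, p.2 + b)

/-- The local rule of the swap CA: λ_R((l⁻,l⁺),(r⁻,r⁺)) = (r⁻, l⁺). -/
def lamR (l r : ZMod 2 × ZMod 2) : ZMod 2 × ZMod 2 := (r.1, l.2)

theorem stmt_3 :
    ¬ ∃ Z : (ℤ → ZMod 2) → (ℤ → ZMod 2),
      ∀ (φ : ℤ → ZMod 2) (ψ : ℤ → ZMod 2 × ZMod 2) (x : ℤ),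
        XX (Z φ x) (lamR (ψ (x - 1)) (ψ (x + 1)))
          = lamR (XX (φ (x - 1)) (ψ (x - 1))) (XX (φ (x + 1)) (ψ (x + 1))) := by
  rintro ⟨Z, h⟩
  have := h (fun n => if n = 1 then 1 else 0) (fun _ => (0, 0)) 0
  simp [XX, lamR, Prod.ext_iff] at this
  obtain ⟨h1, h2⟩ := this
  rw [h2] at h1
  exact one_ne_zero h1.symm
end

section
/- The field F fully characterizes the gauge orbit of the gauge field: for any A, A' : ℤ² → Z₂ × Z₂ with F_A = F_{A'}, there exists φ : ℤ² → Z₂ such that G_φ A = A'. -/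
/-- Gauge action on the gauge field A = (A_r, A_l). -/
def GA (φ : ℤ × ℤ → ZMod 2) (A : ℤ × ℤ → ZMod 2 × ZMod 2) : ℤ × ℤ → ZMod 2 × ZMod 2 :=
  fun p => ((A p).1 + φ (p.1, p.2 + 1) - φ (p.1 - 1, p.2),
            (A p).2 + φ (p.1, p.2 + 1) - φ (p.1 + 1, p.2))

/-- F_A = Δ_r A_l − Δ_l A_r. -/
def Ffield (A : ℤ × ℤ → ZMod 2 × ZMod 2) : ℤ × ℤ → ZMod 2 :=
  fun p => ((A (p.1, p.2 + 1)).2 - (A (p.1 - 1, p.2)).2)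
         - ((A (p.1, p.2 + 1)).1 - (A (p.1 + 1, p.2)).1)

/-! Write `B = A' - A`. By linearity `F_A = F_{A'}` says that `B` is flat, `Δ_r B_l = Δ_l B_r`,
and we must solve `Δ_r φ = B_r`, `Δ_l φ = B_l`; this works over any abelian group. The two equations
are compatible at time `t` iff `φ(x+1,t) - φ(x-1,t) = B_r(x,t) - B_l(x,t)` for all `x`. Solve this
at `t = 0` (independently on even and odd sites), propagate in time by `Δ_r φ = B_r`, and use
flatness to see that the slice condition passes from `t` to `t + 1` and back. -/

open Finset

variable {G : Type*} [AddCommGroup G]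

theorem Int.exists_add_one_eq_add (a : G) (c : ℤ → G) :
    ∃ f : ℤ → G, f 0 = a ∧ ∀ n, f (n + 1) = f n + c n := by
  refine ⟨fun n => a + (∑ i ∈ Ico 0 n, c i - ∑ i ∈ Ico n 0, c i), by simp, fun n => ?_⟩
  dsimp only
  rcases le_or_gt 0 n with hn | hn
  · rw [← insert_Ico_right_eq_Ico_add_one hn, sum_insert (by simp),
      Ico_eq_empty_of_le hn, Ico_eq_empty_of_le (by omega : (0 : ℤ) ≤ n + 1)]
    abel
  · rw [← insert_Ico_add_one_left_eq_Ico hn, sum_insert (by simp),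
      Ico_eq_empty_of_le hn.le, Ico_eq_empty_of_le (by omega : n + 1 ≤ 0)]
    abel

theorem Int.exists_add_eq_add {m : ℤ} (hm : m ≠ 0) (c : ℤ → G) :
    ∃ f : ℤ → G, ∀ n, f (n + m) = f n + c n := by
  -- one sequence per residue class modulo `m`
  choose Q _ hQ using fun r : ℤ => Int.exists_add_one_eq_add 0 fun k => c (m * k + r)
  refine ⟨fun n => Q (n % m) (n / m), fun n => ?_⟩
  have hdiv : (n + m) / m = n / m + 1 := by
    simpa using Int.add_mul_ediv_right n 1 hm
  simp only [Int.add_emod_right, hdiv, hQ, Int.mul_ediv_add_emod]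

theorem exists_diagonal_recursion (φ₀ : ℤ → G) (b : ℤ → ℤ → G) :
    ∃ φ : ℤ → ℤ → G, (∀ x, φ x 0 = φ₀ x) ∧ ∀ x t, φ x (t + 1) = φ (x - 1) t + b x t := by
  choose ψ hψ₀ hψ using fun y => Int.exists_add_one_eq_add (φ₀ y) fun t => b (y + t + 1) t
  refine ⟨fun x t => ψ (x - t) t, fun x => by simp [hψ₀], fun x t => ?_⟩
  simp only [show x - (t + 1) = x - 1 - t by ring, hψ, show x - 1 - t + t + 1 = x by ring]

theorem slice_difference_iff_succ {φ br bl : ℤ → ℤ → G}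
    (hφ : ∀ x t, φ x (t + 1) = φ (x - 1) t + br x t)
    (hflat : ∀ x t, br x (t + 1) - bl x (t + 1) = br (x + 1) t - bl (x - 1) t) (t : ℤ) :
    (∀ x, φ (x + 1) t = φ (x - 1) t + (br x t - bl x t)) ↔
      ∀ x, φ (x + 1) (t + 1) = φ (x - 1) (t + 1) + (br x (t + 1) - bl x (t + 1)) := by
  constructor
  · intro h x
    have h1 : φ (x + 1) (t + 1) = φ x t + br (x + 1) t := by simpa using hφ (x + 1) t
    have h2 : φ x t = φ (x - 2) t + (br (x - 1) t - bl (x - 1) t) := by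
      convert h (x - 1) using 2 <;> ring_nf
    have h3 : φ (x - 1) (t + 1) = φ (x - 2) t + br (x - 1) t := by
      convert hφ (x - 1) t using 3; ring
    linear_combination (norm := abel) h1 + h2 - h3 - hflat x t
  · intro h x
    have h1 : φ (x + 2) (t + 1) = φ (x + 1) t + br (x + 2) t := by
      convert hφ (x + 2) t using 3; ring
    have h2 : φ (x + 2) (t + 1) = φ x (t + 1) + (br (x + 1) (t + 1) - bl (x + 1) (t + 1)) := by
      convert h (x + 1) using 2 <;> ring_nf
    have h3 := hflat (x + 1) t
    rw [show x + 1 + 1 = x + 2 by ring, add_sub_cancel_right] at h3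
    linear_combination (norm := abel) h2 - h1 + hφ x t + h3

theorem exists_potential_of_flat (br bl : ℤ → ℤ → G)
    (hflat : ∀ x t, br x (t + 1) - bl x (t + 1) = br (x + 1) t - bl (x - 1) t) :
    ∃ φ : ℤ → ℤ → G, ∀ x t,
      φ x (t + 1) = φ (x - 1) t + br x t ∧ φ x (t + 1) = φ (x + 1) t + bl x t := by
  obtain ⟨φ₀, hφ₀⟩ := Int.exists_add_eq_add two_ne_zero fun n => br (n + 1) 0 - bl (n + 1) 0
  obtain ⟨φ, hφ0, hφ⟩ := exists_diagonal_recursion φ₀ br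
  have hslice : ∀ t x, φ (x + 1) t = φ (x - 1) t + (br x t - bl x t) := by
    intro t
    induction t using Int.induction_on with
    | zero =>
      intro x
      simpa only [hφ0, sub_add_cancel, show x - 1 + 2 = x + 1 by ring] using hφ₀ (x - 1)
    | succ i ih => exact (slice_difference_iff_succ hφ hflat i).mp ih
    | pred i ih => exact (slice_difference_iff_succ hφ hflat (-i - 1)).mpr (by simpa using ih)
  exact ⟨φ, fun x t => ⟨hφ x t, by linear_combination (norm := abel) hφ x t - hslice t x⟩⟩

theorem stmt_6 (A A' : ℤ × ℤ → ZMod 2 × ZMod 2) (h : Ffield A = Ffield A') :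
    ∃ φ : ℤ × ℤ → ZMod 2, GA φ A = A' := by
  obtain ⟨φ, hφ⟩ := exists_potential_of_flat (fun x t => (A' (x, t)).1 - (A (x, t)).1)
    (fun x t => (A' (x, t)).2 - (A (x, t)).2) fun x t => by
      have hF := congrFun h (x, t)
      simp only [Ffield] at hF
      linear_combination hF
  refine ⟨fun p => φ p.1 p.2, funext fun ⟨x, t⟩ => Prod.ext ?_ ?_⟩
  · simp only [GA]
    linear_combination (hφ x t).1
  · simp only [GA]
    linear_combination (hφ x t).2
end

section
/- If two local transformations of the gauge field agree, the gauge parameters are related by an additive constant on each light-cone coordinate: if G_φ A = G_{φ'} A for gauge fields over ℤ², then φ(x,t+1) − φ'(x,t+1) = φ(x−1,t) − φ'(x−1,t) = φ(x+1,t) − φ'(x+1,t) for all x,t; in particular the difference φ − φ' is constant on connected components of the lattice under steps (x,t) → (x±1,t+1). -/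
theorem stmt_8 (A : ℤ × ℤ → ZMod 2 × ZMod 2) (φ φ' : ℤ × ℤ → ZMod 2)
    (h : GA φ A = GA φ' A) :
    ∀ x t : ℤ,
      φ (x, t + 1) - φ' (x, t + 1) = φ (x - 1, t) - φ' (x - 1, t) ∧
      φ (x, t + 1) - φ' (x, t + 1) = φ (x + 1, t) - φ' (x + 1, t) := by
  intro x t
  have h1 := congrFun h (x, t)
  simp only [GA, Prod.mk.injEq] at h1
  obtain ⟨hr, hl⟩ := h1
  constructor <;> [linear_combination hr; linear_combination hl]
end

section
/- Gauge-invariance of the extended theory on valid diagrams: let ψ : ℤ² → Z₂×Z₂ and A : ℤ² → Z₂×Z₂ satisfy ψ(x,t+1) = W_{A(x,t+1)}(ψ⁺(x−1,t), ψ⁻(x+1,t)) for all x,t, where W_A(a,b) = (b + A_l, a + A_r). Then for any φ : ℤ² → Z₂, the transformed pair ψ'(x,t) = ψ(x,t) + (φ(x,t), φ(x,t)) and A'(x,t) = (A_r(x,t) + φ(x,t) − φ(x−1,t−1), A_l(x,t) + φ(x,t) − φ(x+1,t−1)) satisfies the same update rule: ψ'(x,t+1) = W_{A'(x,t+1)}(ψ'⁺(x−1,t),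 ψ'⁻(x+1,t)) for all x,t. -/
/-- W_A(a,b) = (b + A_l, a + A_r) for A = (A_r, A_l). -/
def WA (A : ZMod 2 × ZMod 2) (a b : ZMod 2) : ZMod 2 × ZMod 2 := (b + A.2, a + A.1)

theorem stmt_11 (ψ A : ℤ × ℤ → ZMod 2 × ZMod 2)
    (hrule : ∀ x t : ℤ,
      ψ (x, t + 1) = WA (A (x, t + 1)) (ψ (x - 1, t)).2 (ψ (x + 1, t)).1)
    (φ : ℤ × ℤ → ZMod 2) :
    ∀ x t : ℤ,
      (let ψ' : ℤ × ℤ → ZMod 2 × ZMod 2 :=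
        fun p => ((ψ p).1 + φ p, (ψ p).2 + φ p)
      let A' : ℤ × ℤ → ZMod 2 × ZMod 2 :=
        fun p => ((A p).1 + φ p - φ (p.1 - 1, p.2 - 1),
                  (A p).2 + φ p - φ (p.1 + 1, p.2 - 1))
      ψ' (x, t + 1) = WA (A' (x, t + 1)) (ψ' (x - 1, t)).2 (ψ' (x + 1, t)).1) := by
  intro x t
  simp only [WA, Prod.ext_iff]
  have h := hrule x t
  rw [h]
  simp only [WA]
  constructor <;> ring_nf
end
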